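/- If the character left R-module R^+ = Hom_Z(R, Q/Z) is a Baer left R-module, then R is a von Neumann regular ring. -/
import Mathlib


universe u

/-- The left `R`-module structure on the character module
`R⁺ = Hom_ℤ(R, ℚ/ℤ)` given by `(r • f) x = f (x * r)`. -/
instance charModuleLeft (R : Type u) [Ring R] : Module R (CharacterModule R) where
  smul r f := (f : R →+ AddCircle (1 : ℚ)).comp (AddMonoidHom.mulRight r)
  one_smul f := by
    ext x
    show f (x * 1) = f x
    rw [mul_one]
  mul_smul r s f := by
    ext x
    show f (x * (r * s)) = f (x * r * s)
    rw [mul_assoc]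
  smul_zero r := by
    ext x
    rfl
  smul_add r f g := by
    ext x
    rfl
  add_smul r s f := by
    ext x
    show f (x * (r + s)) = f (x * r) + f (x * s)
    rw [mul_add, map_add]
  zero_smul f := by
    ext x
    show f (x * 0) = 0
    rw [mul_zero, map_zero]

/-- `M` is a Baer module: the common kernel of any set of endomorphisms
is a direct summand of `M`. -/
def IsBaerModule (R : Type u) [Ring R] (M : Type u) [AddCommGroup M]
    [Module R M] : Prop :=
  ∀ X : Set (Module.End R M), ∃ p : Submodule R M,
    IsCompl (⨅ f ∈ X, LinearMap.ker f) p

/-- If the character left `R`-module `R⁺ = Hom_ℤ(R, ℚ/ℤ)` is Baer, then `R` is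
von Neumann regular. -/
theorem stmt19 (R : Type u) [Ring R]
    (h : IsBaerModule R (CharacterModule R)) :
    ∀ a : R, ∃ b : R, a = a * b * a := by
  intro a
  by_contra hc
  push_neg at hc
  -- the additive subgroup `aRa`
  let g : R →+ R :=
    { toFun := fun r => a * r * a
      map_zero' := by simp
      map_add' := fun x y => by
        show a * (x + y) * a = a * x * a + a * y * a
        rw [mul_add, add_mul] }
  let S : AddSubgroup R := g.range
  have haS : (QuotientAddGroup.mk a : R ⧸ S) ≠ 0 := by
    intro hz
    rw [QuotientAddGroup.eq_zero_iff] at hz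
    obtain ⟨b, hb⟩ := hz
    exact hc b hb.symm
  obtain ⟨c, hcne⟩ := CharacterModule.exists_character_apply_ne_zero_of_ne_zero haS
  let χ : CharacterModule R :=
    (c : (R ⧸ S) →+ AddCircle (1 : ℚ)).comp (QuotientAddGroup.mk' S)
  have hχ : ∀ r, χ (a * r * a) = 0 := by
    intro r
    show c (QuotientAddGroup.mk (a * r * a)) = 0
    rw [show (QuotientAddGroup.mk (a * r * a) : R ⧸ S) = 0 from
      (QuotientAddGroup.eq_zero_iff _).2 ⟨r, rfl⟩, map_zero]
  have hχa : χ a ≠ 0 := hcne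
  -- the endomorphism `f ↦ f (a * ·)`
  let φ : Module.End R (CharacterModule R) :=
    { toFun := fun f => (f : R →+ AddCircle (1 : ℚ)).comp (AddMonoidHom.mulLeft a)
      map_add' := fun f g => by ext x; rfl
      map_smul' := fun r f => by
        ext x
        show f (a * x * r) = f (a * (x * r))
        rw [mul_assoc] }
  obtain ⟨P, hP⟩ := h {φ}
  have hK : (⨅ f ∈ ({φ} : Set (Module.End R (CharacterModule R))), LinearMap.ker f)
      = LinearMap.ker φ := by simp
  rw [hK] at hP
  set K := LinearMap.ker φ with hKdef
  let e := Submodule.linearProjOfIsCompl K P hP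
  have haχK : a • χ ∈ K := by
    rw [hKdef, LinearMap.mem_ker]
    ext x
    show χ (a * x * a) = 0
    exact hχ x
  have h1 : (e (a • χ) : CharacterModule R) = a • χ := by
    rw [show e (a • χ) = (⟨a • χ, haχK⟩ : K) from
      Submodule.linearProjOfIsCompl_apply_left hP ⟨a • χ, haχK⟩]
  have h2 : e (a • χ) = a • e χ := map_smul e a χ
  have h3 : (e χ : CharacterModule R) ∈ K := (e χ).2
  have h4 : (e χ : CharacterModule R) a = 0 := by
    have h3' : φ (e χ : CharacterModule R) = 0 := LinearMap.mem_ker.mp h3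
    have h4' : (e χ : CharacterModule R) (a * 1) = 0 :=
      congrArg (fun f : CharacterModule R => f 1) h3'
    rwa [mul_one] at h4'
  have h5 : χ a = 0 := by
    have heq : (a • χ : CharacterModule R) = a • (e χ : CharacterModule R) :=
      h1.symm.trans (congrArg Subtype.val h2)
    have h5' : χ (1 * a) = (e χ : CharacterModule R) (1 * a) :=
      congrArg (fun f : CharacterModule R => f 1) heq
    rwa [one_mul, h4] at h5'
  exact hχa h5
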